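/- arXiv:1807.07841 — 7 statements merged into one kernel-verified Lean document; each statement's English description precedes it below -/
import Mathlib

section
/- Let G be a group and n > 1. Suppose A : Gⁿ → G is a group homomorphism that is symmetric (invariant under permutations of its arguments) and unanimous (A(g, g, ..., g) = g for all g ∈ G). Then G is abelian. -/
/-! Put `φ a = A (Pi.mulSingle i a)`; by symmetry `φ` does not depend on the coordinate `i`.
Vectors supported on distinct coordinates commute, so, since `n > 1` provides two coordinates,
any two values of `φ` commute. Unanimity gives `a = A (fun _ => a) = φ a ^ n`, so any two
elements of `G` are powers of commuting elements. -/

namespace MonoidHom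

variable {ι M N : Type*} [DecidableEq ι] [Monoid M] [Monoid N] (A : (ι → M) →* N)

theorem map_mulSingle_eq_of_perm_invariant
    (hA : ∀ (σ : Equiv.Perm ι) (g : ι → M), A (g ∘ σ) = A g) (i j : ι) (a : M) :
    A (Pi.mulSingle i a) = A (Pi.mulSingle j a) := by
  rw [← hA (Equiv.swap i j), Pi.mulSingle_comp_equiv, Equiv.symm_swap, Equiv.swap_apply_left]

theorem commute_map_mulSingle_of_perm_invariant
    (hA : ∀ (σ : Equiv.Perm ι) (g : ι → M), A (g ∘ σ) = A g) {i j : ι} (hij : i ≠ j) (a b : M) :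
    Commute (A (Pi.mulSingle i a)) (A (Pi.mulSingle i b)) := by
  rw [map_mulSingle_eq_of_perm_invariant A hA i j b]
  exact (Pi.mulSingle_commute hij a b).map A

theorem map_const_eq_pow_card_of_perm_invariant [Fintype ι]
    (hA : ∀ (σ : Equiv.Perm ι) (g : ι → M), A (g ∘ σ) = A g) (i : ι) (a : M) :
    A (fun _ => a) = A (Pi.mulSingle i a) ^ Fintype.card ι := by
  refine (congrArg A (Finset.noncommProd_mulSingle fun _ : ι => a)).symm.trans ?_
  refine (Finset.map_noncommProd _ _ _ A).trans ?_
  rw [← Finset.card_univ]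
  exact Finset.noncommProd_eq_pow_card _ _ _ _
    fun j _ => map_mulSingle_eq_of_perm_invariant A hA j i a

end MonoidHom

/-- If a group `G` admits a symmetric unanimous aggregation homomorphism
`A : Gⁿ → G` for some `n > 1`, then `G` is abelian. -/
theorem stmt0 {G : Type*} [Group G] (n : ℕ) (hn : 1 < n)
    (A : (Fin n → G) →* G)
    (hsym : ∀ (σ : Equiv.Perm (Fin n)) (g : Fin n → G), A (g ∘ σ) = A g)
    (huna : ∀ g : G, A (fun _ => g) = g) :
    ∀ a b : G, a * b = b * a := by
  intro a b
  let i₀ : Fin n := ⟨0, by omega⟩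
  have hne : i₀ ≠ ⟨1, hn⟩ := by simp [i₀]
  have hpow (g : G) : A (Pi.mulSingle i₀ g) ^ n = g := by
    have := A.map_const_eq_pow_card_of_perm_invariant hsym i₀ g
    rwa [huna, Fintype.card_fin, eq_comm] at this
  have hcomm := (A.commute_map_mulSingle_of_perm_invariant hsym hne a b).pow_pow n n
  rwa [hpow, hpow] at hcomm
end

section
/- Let G be a group and n > 1. Suppose A : Gⁿ → G is a group homomorphism that is symmetric and unanimous. Then G is uniquely n-divisible: for every g ∈ G there exists a unique h ∈ G with hⁿ = g. -/
/-!
A symmetric homomorphism `A : Gⁿ → G` takes the same value `F x` on every vector whose only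
non-identity entry is `x`, and `F` is an endomorphism of `G`. Writing the constant vector `(x, …, x)` as the
product of these `n` single-entry vectors, unanimity gives `x = (F x) ^ n`; since `F` is a
homomorphism, `F (y ^ n) = (F y) ^ n = y` as well, so `F` inverts the `n`-th power map.
-/

open Finset

theorem map_mulSingle_eq_of_perm_invariant {ι M N : Type*} [DecidableEq ι] [One M]
    (A : (ι → M) → N) (hsym : ∀ (σ : Equiv.Perm ι) (g : ι → M), A (g ∘ σ) = A g)
    (i j : ι) (x : M) : A (Pi.mulSingle i x) = A (Pi.mulSingle j x) := by
  rw [← hsym (Equiv.swap i j), Pi.mulSingle_comp_equiv, Equiv.symm_swap, Equiv.swap_apply_left]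

theorem map_const_eq_pow_of_perm_invariant {ι M N : Type*} [Fintype ι] [DecidableEq ι]
    [Monoid M] [Monoid N] (A : (ι → M) →* N)
    (hsym : ∀ (σ : Equiv.Perm ι) (g : ι → M), A (g ∘ σ) = A g) (i : ι) (x : M) :
    A (fun _ => x) = A (Pi.mulSingle i x) ^ Fintype.card ι := by
  calc A (fun _ => x)
      = A (univ.noncommProd (fun j => Pi.mulSingle j x)
          fun j _ k _ _ => Pi.mulSingle_apply_commute (fun _ => x) j k) := by
        rw [noncommProd_mulSingle (fun _ : ι => x)]
    _ = univ.noncommProd (fun j => A (Pi.mulSingle j x)) _ := map_noncommProd _ _ _ A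
    _ = A (Pi.mulSingle i x) ^ Fintype.card ι := noncommProd_eq_pow_card _ _ _ _ fun j _ =>
        map_mulSingle_eq_of_perm_invariant A hsym j i x

theorem pow_bijective_of_monoidHom_pow_eq {M : Type*} [Monoid M] (n : ℕ) (F : M →* M)
    (hF : ∀ x, F x ^ n = x) : Function.Bijective (fun x : M => x ^ n) :=
  Function.bijective_iff_has_inverse.mpr ⟨F, fun y => by simp only [map_pow, hF], hF⟩

/-- If a group `G` admits a symmetric unanimous aggregation homomorphism
`A : Gⁿ → G` for some `n > 1`, then `G` is uniquely `n`-divisible. -/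
theorem stmt1 {G : Type*} [Group G] (n : ℕ) (hn : 1 < n)
    (A : (Fin n → G) →* G)
    (hsym : ∀ (σ : Equiv.Perm (Fin n)) (g : Fin n → G), A (g ∘ σ) = A g)
    (huna : ∀ g : G, A (fun _ => g) = g) :
    ∀ g : G, ∃! h : G, h ^ n = g := by
  let i₀ : Fin n := ⟨0, by omega⟩
  let F : G →* G := A.comp (MonoidHom.mulSingle (fun _ => G) i₀)
  have hF : ∀ x, F x ^ n = x := fun x => by
    have := map_const_eq_pow_of_perm_invariant A hsym i₀ x
    rwa [huna, Fintype.card_fin, eq_comm] at this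
  exact (pow_bijective_of_monoidHom_pow_eq n F hF).existsUnique
end

section
/- Let G be a group and n > 1. Suppose A : Gⁿ → G is a group homomorphism that is symmetric and unanimous, and define ρ : G → G by ρ(g) = A(g, e, ..., e) (g in the first coordinate, identity elsewhere). Then ρ is a group homomorphism satisfying ρ(g)ⁿ = g for all g ∈ G, and ρ is bijective. -/
/-! Symmetry makes `A (Pi.mulSingle i g)` independent of `i`, so `ρ = A ∘ mulSingle i` for every
coordinate `i`. Writing the constant tuple `g` as the product of the commuting tuples
`Pi.mulSingle i g` gives `g = A (fun _ => g) = ρ g ^ n`. A homomorphism with `ρ g ^ n = g` is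
injective (apply `· ^ n`) and surjective (`ρ (g ^ n) = g`). -/

namespace MonoidHom

variable {ι M : Type*} [DecidableEq ι] [Monoid M]

theorem apply_mulSingle_eq_of_perm_invariant (A : (ι → M) →* M)
    (hsym : ∀ (σ : Equiv.Perm ι) (x : ι → M), A (x ∘ σ) = A x) (i j : ι) (g : M) :
    A (Pi.mulSingle i g) = A (Pi.mulSingle j g) := by
  rw [← hsym (Equiv.swap i j), Pi.mulSingle_comp_equiv, Equiv.symm_swap, Equiv.swap_apply_left]

theorem apply_const_eq_pow_of_perm_invariant [Fintype ι] (A : (ι → M) →* M)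
    (hsym : ∀ (σ : Equiv.Perm ι) (x : ι → M), A (x ∘ σ) = A x) (i : ι) (g : M) :
    A (fun _ => g) = A (Pi.mulSingle i g) ^ Fintype.card ι := by
  have hprod := (Finset.map_noncommProd _ _ _ A).symm.trans
    (congrArg A (Finset.noncommProd_mulSingle fun _ : ι => g))
  rw [← Finset.card_univ, ← hprod]
  exact Finset.noncommProd_eq_pow_card _ _ _ _
    fun j _ => apply_mulSingle_eq_of_perm_invariant A hsym j i g

theorem bijective_of_pow_apply_eq {G : Type*} [Group G] (f : G →* G) (n : ℕ)
    (hpow : ∀ g, f g ^ n = g) : Function.Bijective f := by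
  refine ⟨fun a b hab => ?_, fun g => ⟨g ^ n, by rw [map_pow, hpow]⟩⟩
  rw [← hpow a, ← hpow b, hab]

end MonoidHom

/-- Given a symmetric unanimous aggregation homomorphism `A : Gⁿ → G`, `n > 1`,
the map `ρ(g) = A(g, e, ..., e)` is a bijective homomorphism with `ρ(g)ⁿ = g`. -/
theorem stmt2 {G : Type*} [Group G] (n : ℕ) (hn : 1 < n)
    (A : (Fin n → G) →* G)
    (hsym : ∀ (σ : Equiv.Perm (Fin n)) (g : Fin n → G), A (g ∘ σ) = A g)
    (huna : ∀ g : G, A (fun _ => g) = g)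
    (ρ : G → G)
    (hρ : ∀ g : G, ρ g = A (fun i => if i = (⟨0, by omega⟩ : Fin n) then g else 1)) :
    (∀ a b : G, ρ (a * b) = ρ a * ρ b) ∧ (∀ g : G, ρ g ^ n = g) ∧
      Function.Bijective ρ := by
  set z : Fin n := ⟨0, by omega⟩
  set f : G →* G := A.comp (MonoidHom.mulSingle (fun _ => G) z)
  have hρf : ρ = f := funext fun g => by
    rw [hρ]
    exact congrArg A (funext fun i => (Pi.mulSingle_apply _ _ _).symm)
  have hpow : ∀ g, f g ^ n = g := fun g => by
    simpa [f, huna, Fintype.card_fin] using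
      (A.apply_const_eq_pow_of_perm_invariant hsym z g).symm
  subst hρf
  exact ⟨map_mul f, hpow, f.bijective_of_pow_apply_eq n hpow⟩
end

section
/- Let X be a Hausdorff space, n ∈ ℕ, and x = (x₁,...,xₙ) ∈ Xⁿ a tuple in which no value occurs in strictly more than n/2 coordinates. Then there exist pairwise disjoint open sets U₁,...,U_k in X, one around each distinct coordinate value, such that the product neighborhood ∏ᵢ U_{φ(i)} of x (where φ(i) indexes the distinct value equal to xᵢ) contains no tuple in which some value occurs in more than n/2 coordinates. -/
/-! Separate the finitely many values of `x` by pairwise disjoint open sets `V a`. If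
`z i ∈ V (x i)` for every `i`, disjointness forces all coordinates on which `z` takes a given
value into a single fibre of `x`, so every value count of `z` is bounded by one of `x`. -/

open Set

theorem exists_fiber_subset_fiber_of_mem_pairwiseDisjoint {ι X : Type*} {x z : ι → X}
    {V : X → Set X} (hV : (range x).PairwiseDisjoint V) (hz : ∀ i, z i ∈ V (x i)) (y : X) :
    ∃ y', {i | z i = y} ⊆ {i | x i = y'} := by
  by_cases hy : ∃ i₀, z i₀ = y
  · obtain ⟨i₀, hi₀⟩ := hy
    refine ⟨x i₀, fun i hi => ?_⟩
    by_contra hne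
    exact (hV (mem_range_self i) (mem_range_self i₀) hne).ne_of_mem (hz i) (hz i₀)
      (hi.trans hi₀.symm)
  · exact ⟨y, fun i hi => (hy ⟨i, hi⟩).elim⟩

/-- If no value occurs in more than `n/2` coordinates of a tuple `x ∈ Xⁿ`
(`X` Hausdorff), there is a product neighborhood of `x`, built from pairwise
disjoint open sets around the distinct coordinate values, containing no tuple
in which some value occurs in more than `n/2` coordinates. -/
theorem stmt6 {X : Type*} [TopologicalSpace X] [T2Space X] (n : ℕ)
    (x : Fin n → X)
    (hx : ∀ y : X, 2 * Nat.card {i : Fin n // x i = y} ≤ n) :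
    ∃ U : Fin n → Set X,
      (∀ i, IsOpen (U i)) ∧ (∀ i, x i ∈ U i) ∧
      (∀ i j, x i = x j → U i = U j) ∧
      (∀ i j, x i ≠ x j → Disjoint (U i) (U j)) ∧
      ∀ z : Fin n → X, (∀ i, z i ∈ U i) →
        ∀ y : X, 2 * Nat.card {i : Fin n // z i = y} ≤ n := by
  obtain ⟨V, hV, hVd⟩ := (finite_range x).t2_separation
  refine ⟨fun i => V (x i), fun i => (hV (x i)).2, fun i => (hV (x i)).1,
    fun i j h => congrArg V h, fun i j h => hVd (mem_range_self i) (mem_range_self j) h, ?_⟩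
  intro z hz y
  obtain ⟨y', hsub⟩ := exists_fiber_subset_fiber_of_mem_pairwiseDisjoint hVd hz y
  have hcard : Nat.card {i | z i = y} ≤ Nat.card {i | x i = y'} :=
    Nat.card_mono (toFinite _) hsub
  exact (Nat.mul_le_mul_left 2 hcard).trans (hx y')
end

section
/- Let X be a topological space, n > 1, and A : Xⁿ → X a continuous map that is symmetric and unanimous. Then for every k ≥ 1 and every basepoint x₀ ∈ X, the k-th homotopy group π_k(X, x₀) is abelian and uniquely n-divisible. -/
/-!
Applying `A` pointwise to `n` generalized loops gives a homomorphism `m : π_kⁿ → π_k`,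
which inherits symmetry and unanimity from `A`. For any such homomorphism of monoids let
`e a := m (Pi.mulSingle i a)`; by symmetry `e` does not depend on `i`, so
`a = m (a, …, a) = (e a)ⁿ`, and `e a`, `e b` commute, being images of elements supported on
different coordinates. Hence `a * b = (e a)ⁿ (e b)ⁿ = b * a`, and `e g` is the unique
`n`-th root of `g` because `h = e (hⁿ)` for every `h`.
-/

open scoped Topology Topology.Homotopy

section

variable {ι α β : Type*}

def IsPermInvariant (f : (ι → α) → β) : Prop :=
  ∀ (σ : Equiv.Perm ι) (x : ι → α), f (x ∘ σ) = f x

def IsUnanimous (f : (ι → α) → α) : Prop :=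
  ∀ a, f (fun _ => a) = a

end

namespace MonoidHom

variable {ι M : Type*} [DecidableEq ι] [Monoid M] {m : (ι → M) →* M}

theorem map_mulSingle_eq_of_isPermInvariant (hsymm : IsPermInvariant m) (i j : ι) (a : M) :
    m (Pi.mulSingle i a) = m (Pi.mulSingle j a) := by
  rw [← hsymm (Equiv.swap i j), Pi.mulSingle_comp_equiv, Equiv.symm_swap, Equiv.swap_apply_left]

variable [Fintype ι]

theorem map_const_eq_pow_card (hsymm : IsPermInvariant m) (i : ι) (a : M) :
    m (fun _ => a) = m (Pi.mulSingle i a) ^ Fintype.card ι := by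
  have hprod := Finset.map_noncommProd Finset.univ
    (fun j => Pi.mulSingle (M := fun _ : ι => M) j a)
    (fun j _ k _ _ => Pi.mulSingle_apply_commute (fun _ => a) j k) m
  rw [Finset.noncommProd_mulSingle] at hprod
  rw [hprod]
  exact Finset.noncommProd_eq_pow_card _ _ _ _
    fun j _ => map_mulSingle_eq_of_isPermInvariant hsymm j i a

theorem map_mulSingle_pow_card (hsymm : IsPermInvariant m) (hunan : IsUnanimous m)
    (i : ι) (a : M) : m (Pi.mulSingle i a) ^ Fintype.card ι = a := by
  rw [← map_const_eq_pow_card hsymm, hunan]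

theorem commute_of_isPermInvariant_of_isUnanimous [Nontrivial ι] (hsymm : IsPermInvariant m)
    (hunan : IsUnanimous m) (a b : M) : Commute a b := by
  obtain ⟨i, j, hij⟩ := exists_pair_ne ι
  rw [← map_mulSingle_pow_card hsymm hunan i a, ← map_mulSingle_pow_card hsymm hunan j b]
  exact ((Pi.mulSingle_commute hij a b).map m).pow_pow _ _

theorem existsUnique_pow_card_eq [Nonempty ι] (hsymm : IsPermInvariant m) (hunan : IsUnanimous m)
    (g : M) : ∃! h : M, h ^ Fintype.card ι = g := by
  obtain ⟨i⟩ := ‹Nonempty ι›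
  refine ⟨m (Pi.mulSingle i g), map_mulSingle_pow_card hsymm hunan i g, fun h hh => ?_⟩
  rw [← hh, Pi.mulSingle_pow, map_pow, map_mulSingle_pow_card hsymm hunan]

end MonoidHom

namespace GenLoop

variable {N ι X Y : Type*} [TopologicalSpace X] [TopologicalSpace Y] {x : X} {y : Y}
  (A : C(ι → X, Y)) (hA : A (fun _ => x) = y)

def mapPi (p : ι → Ω^ N X x) : Ω^ N Y y :=
  ⟨A.comp (.pi fun i => p i), fun t ht =>
    (congrArg A (funext fun i => GenLoop.boundary (p i) t ht)).trans hA⟩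

theorem mapPi_homotopic {p q : ι → Ω^ N X x} (h : ∀ i, Homotopic (p i) (q i)) :
    Homotopic (mapPi A hA p) (mapPi A hA q) :=
  have ⟨H⟩ := Classical.nonempty_pi.2 h
  ⟨(ContinuousMap.HomotopyRel.pi H).compContinuousMap A⟩

theorem mapPi_transAt [DecidableEq N] (j : N) (p q : ι → Ω^ N X x) :
    mapPi A hA (fun i => transAt j (p i) (q i)) = transAt j (mapPi A hA p) (mapPi A hA q) := by
  ext t
  change A (fun i => ite _ _ _) = ite _ _ _
  split_ifs <;> rfl

theorem mapPi_const : mapPi A hA (fun _ => (const : Ω^ N X x)) = const :=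
  GenLoop.ext _ _ fun _ => hA

theorem mapPi_comp_perm (hsymm : IsPermInvariant A) (σ : Equiv.Perm ι) (p : ι → Ω^ N X x) :
    mapPi A hA (p ∘ σ) = mapPi A hA p :=
  GenLoop.ext _ _ fun t => hsymm σ fun i => p i t

theorem mapPi_fun_const {A : C(ι → X, X)} (hunan : IsUnanimous A) (p : Ω^ N X x) :
    mapPi A (hunan x) (fun _ => p) = p :=
  GenLoop.ext _ _ fun t => hunan (p t)

end GenLoop

namespace HomotopyGroup

variable {N ι X Y : Type*} [TopologicalSpace X] [TopologicalSpace Y] {x : X} {y : Y}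
  (A : C(ι → X, Y)) (hA : A (fun _ => x) = y)

noncomputable def mapPiFun (a : ι → HomotopyGroup N X x) : HomotopyGroup N Y y :=
  ⟦GenLoop.mapPi A hA fun i => (a i).out⟧

theorem mapPiFun_eq_mk {a : ι → HomotopyGroup N X x} {p : ι → Ω^ N X x}
    (hp : ∀ i, ⟦p i⟧ = a i) : mapPiFun A hA a = ⟦GenLoop.mapPi A hA p⟧ :=
  Quotient.sound <| GenLoop.mapPi_homotopic A hA fun i =>
    Quotient.exact ((Quotient.out_eq (a i)).trans (hp i).symm)

variable [DecidableEq N] [Nonempty N]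

noncomputable def mapPi : (ι → HomotopyGroup N X x) →* HomotopyGroup N Y y where
  toFun := mapPiFun A hA
  map_one' := by
    change mapPiFun A hA 1 = 1
    rw [mapPiFun_eq_mk A hA (a := 1) (p := fun _ => GenLoop.const)
      fun _ => HomotopyGroup.one_def.symm, GenLoop.mapPi_const]
    exact HomotopyGroup.one_def.symm
  map_mul' a b := by
    obtain ⟨j⟩ := ‹Nonempty N›
    have hmul : ∀ i, ⟦GenLoop.transAt j (b i).out (a i).out⟧ = (a * b) i := fun i =>
      HomotopyGroup.mul_spec.symm.trans
        (congrArg₂ (· * ·) (Quotient.out_eq _) (Quotient.out_eq _))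
    change mapPiFun A hA (a * b) = mapPiFun A hA a * mapPiFun A hA b
    rw [mapPiFun_eq_mk A hA hmul, GenLoop.mapPi_transAt]
    exact HomotopyGroup.mul_spec.symm

theorem isPermInvariant_mapPi (hsymm : IsPermInvariant A) :
    IsPermInvariant (mapPi (N := N) A hA) := fun σ a =>
  congrArg (Quotient.mk _) (GenLoop.mapPi_comp_perm A hA hsymm σ fun i => (a i).out)

theorem isUnanimous_mapPi {A : C(ι → X, X)} (hunan : IsUnanimous A) :
    IsUnanimous (mapPi (N := N) A (hunan x)) :=
  fun a =>
    (congrArg (Quotient.mk _) (GenLoop.mapPi_fun_const hunan a.out)).trans (Quotient.out_eq a)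

end HomotopyGroup

/-- If `X` admits a continuous symmetric unanimous map `A : Xⁿ → X`, `n > 1`,
then every homotopy group `π_k(X, x₀)`, `k ≥ 1`, is abelian and uniquely
`n`-divisible. -/
theorem stmt7 {X : Type*} [TopologicalSpace X] (n : ℕ) (hn : 1 < n)
    (A : C((Fin n → X), X))
    (hsym : ∀ (σ : Equiv.Perm (Fin n)) (x : Fin n → X), A (x ∘ σ) = A x)
    (huna : ∀ x : X, A (fun _ => x) = x) :
    ∀ (k : ℕ) (x₀ : X),
      (∀ a b : π_ (k + 1) X x₀, a * b = b * a) ∧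
      (∀ g : π_ (k + 1) X x₀, ∃! h : π_ (k + 1) X x₀, h ^ n = g) := by
  intro k x₀
  have : Nontrivial (Fin n) := Fin.nontrivial_iff_two_le.2 hn
  have hm_symm := HomotopyGroup.isPermInvariant_mapPi (N := Fin (k + 1)) A (huna x₀) hsym
  have hm_unan := HomotopyGroup.isUnanimous_mapPi (N := Fin (k + 1)) (x := x₀) huna
  constructor
  · exact fun a b => (MonoidHom.commute_of_isPermInvariant_of_isUnanimous hm_symm hm_unan a b).eq
  · intro g
    simpa only [Fintype.card_fin] using MonoidHom.existsUnique_pow_card_eq hm_symm hm_unan g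
end

section
/- Let X be a path-connected topological space, n > 1, and A : Xⁿ → X a continuous symmetric unanimous map. Then the fundamental group π₁(X, x₀) is abelian for any basepoint x₀. -/
/-!
A continuous symmetric unanimous `A : Xⁿ → X` induces a homomorphism `G : π₁(X)ⁿ → π₁(X)` that
is symmetric and restricts to the identity on the diagonal. With `φ p = G (p, 1, …, 1)`,
symmetry gives `φ p = G (1, …, p, …, 1)` in every slot, so the values of `φ` commute (put them
in different slots), and `p = G (p, …, p) = φ p ^ n`. Hence any two loops commute.
-/

theorem commute_of_symmetric_unanimous_monoidHom {M ι : Type*} [Monoid M] [Fintype ι]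
    [DecidableEq ι] [Nontrivial ι] (G : (ι → M) →* M) (hdiag : ∀ p, G (fun _ => p) = p)
    (hperm : ∀ (σ : Equiv.Perm ι) (f : ι → M), G (f ∘ σ) = G f) (p q : M) : Commute p q := by
  obtain ⟨i, j, hij⟩ := exists_pair_ne ι
  set φ : M → M := fun r => G (Pi.mulSingle i r)
  have hsingle : ∀ k r, G (Pi.mulSingle k r) = φ r := by
    intro k r
    rw [← hperm (Equiv.swap i k), Pi.mulSingle_comp_equiv, Equiv.symm_swap,
      Equiv.swap_apply_right]
  have hpow : ∀ r, φ r ^ Fintype.card ι = r := by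
    intro r
    calc φ r ^ Fintype.card ι
        = Finset.univ.noncommProd (fun k => G (Pi.mulSingle k r)) _ :=
          (Finset.noncommProd_eq_pow_card _ _ _ _ fun k _ => hsingle k r).symm
      _ = G (Finset.univ.noncommProd (fun k => Pi.mulSingle k r)
            fun k _ l _ _ => Pi.mulSingle_apply_commute (fun _ => r) k l) :=
          (Finset.map_noncommProd _ _ _ G).symm
      _ = r := by rw [Finset.noncommProd_mulSingle (fun _ => r), hdiag]
  have hcomm : Commute (φ p) (φ q) := by
    rw [← hsingle j q]
    exact (Pi.mulSingle_commute hij p q).map G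
  rw [← hpow p, ← hpow q]
  exact hcomm.pow_pow _ _

namespace FundamentalGroup

noncomputable def pi {ι : Type*} {X : ι → Type*} [∀ i, TopologicalSpace (X i)]
    {as : ∀ i, X i} : (∀ i, FundamentalGroup (X i) (as i)) →* FundamentalGroup (∀ i, X i) as :=
  MonoidHom.mk' (fun γ => Path.Homotopic.pi γ) fun γ δ =>
    (Path.Homotopic.comp_pi_eq_pi_comp δ γ).symm

variable {ι X : Type*} [TopologicalSpace X] {x₀ : X}

theorem mapOfEq_pi_fromPath (A : C((ι → X), X)) (h : A (fun _ => x₀) = x₀)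
    (γ : ι → Path x₀ x₀) :
    mapOfEq A h (pi fun i => fromPath (Path.Homotopic.Quotient.mk (γ i))) =
      fromPath (Path.Homotopic.Quotient.mk
        (((Path.pi γ).map A.continuous).cast h.symm h.symm)) := by
  rw [mapOfEq_apply]
  show ((Path.Homotopic.pi fun i => Path.Homotopic.Quotient.mk (γ i)).map A).cast _ _ = _
  rw [Path.Homotopic.pi_lift]
  rfl

theorem commute_of_symmetric_unanimous [Fintype ι] [Nontrivial ι] (A : C((ι → X), X))
    (hsym : ∀ (σ : Equiv.Perm ι) (x : ι → X), A (x ∘ σ) = A x)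
    (huna : ∀ x : X, A (fun _ => x) = x) (a b : FundamentalGroup X x₀) : Commute a b := by
  classical
  refine commute_of_symmetric_unanimous_monoidHom ((mapOfEq A (huna x₀)).comp pi) ?_ ?_ a b
  · intro p
    induction p using Quotient.inductionOn with | h γ =>
    refine (mapOfEq_pi_fromPath A (huna x₀) fun _ => γ).trans
      (congrArg Path.Homotopic.Quotient.mk ?_)
    ext t
    exact huna (γ t)
  · intro σ f
    induction f using Quotient.induction_on_pi with | _ γ =>
    refine (mapOfEq_pi_fromPath A (huna x₀) (γ ∘ σ)).trans
      (.trans (congrArg Path.Homotopic.Quotient.mk ?_) (mapOfEq_pi_fromPath A (huna x₀) γ).symm)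
    ext t
    exact hsym σ fun i => γ i t

end FundamentalGroup

theorem stmt8_general {X : Type*} [TopologicalSpace X]
    (n : ℕ) (hn : 1 < n)
    (A : C((Fin n → X), X))
    (hsym : ∀ (σ : Equiv.Perm (Fin n)) (x : Fin n → X), A (x ∘ σ) = A x)
    (huna : ∀ x : X, A (fun _ => x) = x) :
    ∀ (x₀ : X) (a b : FundamentalGroup X x₀), a * b = b * a := by
  intro x₀ a b
  have : Nontrivial (Fin n) := Fin.nontrivial_iff_two_le.2 hn
  exact (FundamentalGroup.commute_of_symmetric_unanimous A hsym huna a b).eq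

/-- If a path-connected space `X` admits a continuous symmetric unanimous map
`A : Xⁿ → X`, `n > 1`, then its fundamental group is abelian. -/
theorem stmt8 {X : Type*} [TopologicalSpace X] [PathConnectedSpace X]
    (n : ℕ) (hn : 1 < n)
    (A : C((Fin n → X), X))
    (hsym : ∀ (σ : Equiv.Perm (Fin n)) (x : Fin n → X), A (x ∘ σ) = A x)
    (huna : ∀ x : X, A (fun _ => x) = x) :
    ∀ (x₀ : X) (a b : FundamentalGroup X x₀), a * b = b * a :=
  stmt8_general n hn A hsym huna
end

section
/- Let G be a group such that for every n > 1 there exists a symmetric unanimous homomorphism Aₙ : Gⁿ → G. Then G is abelian and uniquely divisible, hence carries a (unique) ℚ-vector space structure. -/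
/-!
Fix a symmetric unanimous `A : Gⁿ →* G` with `n > 1`. By symmetry, `r x := A (Pi.mulSingle i x)`
does not depend on `i`, and `r x ^ n = A (∏ᵢ Pi.mulSingle i x) = A (x, …, x) = x`. Images of
different coordinates commute, so `x = r x ^ n` and `y = r y ^ n` commute. Since `r` is a
homomorphism, any `y` with `y ^ n = x` satisfies `y = r (y ^ n) = r x`: roots are unique.
A uniquely divisible abelian group is isomorphic to its divisible hull, hence a `ℚ`-module,
and a `ℚ`-module structure is unique.
-/

namespace MonoidHom

variable {ι M : Type*} [Monoid M]

def IsSymmetric (A : (ι → M) →* M) : Prop :=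
  ∀ (σ : Equiv.Perm ι) (g : ι → M), A (g ∘ σ) = A g

def IsUnanimous (A : (ι → M) →* M) : Prop :=
  ∀ g : M, A (fun _ => g) = g

variable [DecidableEq ι] {A : (ι → M) →* M}

theorem IsSymmetric.map_mulSingle_eq (hA : A.IsSymmetric) (i j : ι) (x : M) :
    A (Pi.mulSingle i x) = A (Pi.mulSingle j x) := by
  rw [← hA (Equiv.swap i j), Pi.mulSingle_comp_equiv, Equiv.symm_swap, Equiv.swap_apply_left]

variable [Fintype ι]

theorem IsSymmetric.map_mulSingle_pow_card (hA : A.IsSymmetric) (hU : A.IsUnanimous)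
    (i : ι) (x : M) : A (Pi.mulSingle i x) ^ Fintype.card ι = x := by
  calc A (Pi.mulSingle i x) ^ Fintype.card ι
      = Finset.univ.noncommProd (fun j => A (Pi.mulSingle j x))
          (fun j _ k _ _ => (Pi.mulSingle_apply_commute (fun _ => x) j k).map A) :=
        (Finset.noncommProd_eq_pow_card _ _ _ _ fun j _ => hA.map_mulSingle_eq j i x).symm
    _ = A (Finset.univ.noncommProd (fun j => Pi.mulSingle j x)
          (fun j _ k _ _ => Pi.mulSingle_apply_commute (fun _ => x) j k)) :=
        (Finset.map_noncommProd _ _ _ A).symm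
    _ = A (fun _ => x) := congrArg A (Finset.noncommProd_mulSingle _)
    _ = x := hU x

theorem IsSymmetric.commute [Nontrivial ι] (hA : A.IsSymmetric) (hU : A.IsUnanimous)
    (x y : M) : Commute x y := by
  obtain ⟨i, j, hij⟩ := exists_pair_ne ι
  rw [← hA.map_mulSingle_pow_card hU i x, ← hA.map_mulSingle_pow_card hU j y]
  exact ((Pi.mulSingle_commute hij x y).map A).pow_pow _ _

theorem IsSymmetric.existsUnique_pow_card_eq (hA : A.IsSymmetric) (hU : A.IsUnanimous)
    (i : ι) (x : M) : ∃! y : M, y ^ Fintype.card ι = x := by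
  refine ⟨A (Pi.mulSingle i x), hA.map_mulSingle_pow_card hU i x, fun y hy => ?_⟩
  rw [← hy, Pi.mulSingle_pow, map_pow, hA.map_mulSingle_pow_card hU]

end MonoidHom

theorem DivisibleHull.coe_surjective {M : Type*} [AddCommMonoid M]
    (h : ∀ s : ℕ+, Function.Surjective fun m : M => (s : ℕ) • m) :
    Function.Surjective ((↑) : M → DivisibleHull M) := by
  intro x
  induction x with | mk m s
  obtain ⟨b, rfl⟩ := h s m
  exact ⟨b, DivisibleHull.mk_eq_mk.2 ⟨1, by simp⟩⟩

noncomputable abbrev Module.ratOfBijectiveNSMul {A : Type*} [AddCommGroup A]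
    (h : ∀ n : ℕ, n ≠ 0 → Function.Bijective fun a : A => n • a) : Module ℚ A :=
  haveI : IsAddTorsionFree A := ⟨fun n hn => (h n hn).1⟩
  let e : A ≃+ DivisibleHull A := AddEquiv.ofBijective (DivisibleHull.coeAddMonoidHom A)
    ⟨DivisibleHull.coe_injective, DivisibleHull.coe_surjective fun s => (h s s.ne_zero).2⟩
  letI : SMul ℚ A := ⟨fun q a => e.symm (q • e a)⟩
  Function.Injective.module ℚ e.toAddMonoidHom e.injective fun _ _ => e.apply_symm_apply _

section RatAction

variable {G : Type*}

def IsRatAction [Mul G] (smul : ℚ → G → G) : Prop :=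
  (∀ g : G, smul 1 g = g) ∧
  (∀ (q : ℚ) (g g' : G), smul q (g * g') = smul q g * smul q g') ∧
  (∀ (q r : ℚ) (g : G), smul (q + r) g = smul q g * smul r g) ∧
  (∀ (q r : ℚ) (g : G), smul (q * r) g = smul q (smul r g))

variable [CommGroup G] {smul : ℚ → G → G}

theorem IsRatAction.smul_one (h : IsRatAction smul) (q : ℚ) : smul q 1 = 1 := by
  simpa using h.2.1 q 1 1

theorem IsRatAction.zero_smul (h : IsRatAction smul) (g : G) : smul 0 g = 1 := by
  simpa using h.2.2.1 0 0 g

abbrev IsRatAction.toModule (h : IsRatAction smul) : Module ℚ (Additive G) where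
  smul q a := .ofMul (smul q a.toMul)
  one_smul := h.1
  mul_smul := h.2.2.2
  smul_zero := h.smul_one
  smul_add := h.2.1
  add_smul := h.2.2.1
  zero_smul := h.zero_smul

theorem IsRatAction.of_module [Module ℚ (Additive G)] :
    IsRatAction fun q (g : G) => (q • Additive.ofMul g).toMul :=
  ⟨fun g => one_smul ℚ (Additive.ofMul g),
    fun q g g' => smul_add q (Additive.ofMul g) (.ofMul g'),
    fun q r g => add_smul q r (Additive.ofMul g), fun q r g => mul_smul q r (Additive.ofMul g)⟩

theorem IsRatAction.eq {smul' : ℚ → G → G} (h : IsRatAction smul) (h' : IsRatAction smul') :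
    smul = smul' := by
  have hmod := Subsingleton.elim h.toModule h'.toModule
  funext q g
  exact congrArg (fun m : Module ℚ (Additive G) => letI := m; (q • Additive.ofMul g).toMul) hmod

theorem existsUnique_isRatAction (h : ∀ n : ℕ, 0 < n → ∀ g : G, ∃! r : G, r ^ n = g) :
    ∃! smul : ℚ → G → G, IsRatAction smul := by
  let _ := Module.ratOfBijectiveNSMul (A := Additive G) fun n hn =>
    (Function.bijective_iff_existsUnique _).2 (h n (Nat.pos_of_ne_zero hn))
  exact ⟨_, .of_module, fun _ hs => hs.eq .of_module⟩

end RatAction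

/-- If a group `G` admits symmetric unanimous aggregation homomorphisms
`Aₙ : Gⁿ → G` for all `n > 1`, then `G` is abelian and uniquely divisible, and
hence carries a unique `ℚ`-scalar-multiplication structure. -/
theorem stmt12 {G : Type*} [Group G]
    (h : ∀ n : ℕ, 1 < n → ∃ A : (Fin n → G) →* G,
      (∀ (σ : Equiv.Perm (Fin n)) (g : Fin n → G), A (g ∘ σ) = A g) ∧
      ∀ g : G, A (fun _ => g) = g) :
    (∀ a b : G, a * b = b * a) ∧
    (∀ (m : ℕ), 0 < m → ∀ g : G, ∃! h : G, h ^ m = g) ∧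
    (∃! smul : ℚ → G → G,
      (∀ g : G, smul 1 g = g) ∧
      (∀ (q : ℚ) (g g' : G), smul q (g * g') = smul q g * smul q g') ∧
      (∀ (q r : ℚ) (g : G), smul (q + r) g = smul q g * smul r g) ∧
      (∀ (q r : ℚ) (g : G), smul (q * r) g = smul q (smul r g))) := by
  have comm (a b : G) : a * b = b * a := by
    obtain ⟨A, hsymm, hunan⟩ := h 2 one_lt_two
    exact (MonoidHom.IsSymmetric.commute hsymm hunan a b).eq
  let _ : CommGroup G := { ‹Group G› with mul_comm := comm }
  have root (m : ℕ) (hm : 0 < m) (g : G) : ∃! r : G, r ^ m = g := by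
    obtain rfl | hm := Nat.succ_le_of_lt hm |>.eq_or_lt
    · simp
    · obtain ⟨A, hsymm, hunan⟩ := h m hm
      simpa using MonoidHom.IsSymmetric.existsUnique_pow_card_eq hsymm hunan ⟨0, hm.pos⟩ g
  exact ⟨comm, root, existsUnique_isRatAction root⟩
end
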